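/- arXiv:2509.06634 — 5 statements merged into one kernel-verified Lean document; each statement's English description precedes it below -/
import Mathlib

section
/- Let ℑ be a closed two-sided ideal in a C*-algebra A and let (aₙ) be a sequence in ℑ with Σₙ ‖aₙ‖² ≤ 1. Then there exist b ∈ ℑ with b ≥ 0 and a sequence (cₙ) in ℑ with ‖cₙ‖ ≤ 1 for all n, such that aₙ = b·cₙ for every n. -/
/-!
Put `s = ∑ aₙ aₙ*`, a positive element of `I` of norm `≤ 1`, and `b = s^{1/4}`.
Since `aₙ aₙ* ≤ s`, for every continuous `h` we get
`‖h(s) aₙ‖² = ‖h(s) aₙ aₙ* h(s)‖ ≤ ‖h(s)² s‖ ≤ sup_{σ(s)} h(t)² t`.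
Applied to `hᵥ(t) = t^{3/4} / (t + v⁴)`, a bounded approximation of `t^{-1/4}`, this shows
that `hᵥ(s) aₙ` has norm `≤ 1`, is Cauchy as `v → 0`, and that `s^{1/4} hᵥ(s) aₙ → aₙ`;
the limit is `cₙ`, which lies in `I` because `I` is a closed left ideal.
-/

open Filter Topology Set

lemma cauchySeq_of_dist_le_add {X β : Type*} [PseudoMetricSpace X] [Nonempty β]
    [SemilatticeSup β] {d : β → X} {r : β → ℝ} (hd : ∀ k l, dist (d k) (d l) ≤ r k + r l)
    (hr : Tendsto r atTop (𝓝 0)) : CauchySeq d := by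
  refine Metric.cauchySeq_iff'.2 fun ε hε => ?_
  obtain ⟨N, hN⟩ := (hr.eventually (gt_mem_nhds (half_pos hε))).exists_forall_of_atTop
  exact ⟨N, fun n hn => (hd n N).trans_lt (by linarith [hN n hn, hN N le_rfl])⟩

namespace TwoSidedIdeal

variable {R A : Type*} [CommSemiring R] [Star R] [Ring A] [StarRing A] [Algebra R A]
  [StarModule R A]

def starCore (I : TwoSidedIdeal A) : NonUnitalStarSubalgebra R A where
  carrier := {x | x ∈ I ∧ star x ∈ I}
  add_mem' hx hy := ⟨I.add_mem hx.1 hy.1, by rw [star_add]; exact I.add_mem hx.2 hy.2⟩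
  zero_mem' := ⟨I.zero_mem, by rw [star_zero]; exact I.zero_mem⟩
  mul_mem' hx hy := ⟨I.mul_mem_left _ _ hy.1, by rw [star_mul]; exact I.mul_mem_left _ _ hx.2⟩
  smul_mem' r x hx := by
    refine ⟨?_, ?_⟩
    · rw [Algebra.smul_def]; exact I.mul_mem_left _ _ hx.1
    · rw [star_smul, Algebra.smul_def]; exact I.mul_mem_left _ _ hx.2
  star_mem' hx := ⟨hx.2, by rw [star_star]; exact hx.1⟩

lemma mem_starCore {I : TwoSidedIdeal A} {x : A} :
    x ∈ I.starCore (R := R) ↔ x ∈ I ∧ star x ∈ I :=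
  Iff.rfl

lemma isClosed_starCore [TopologicalSpace A] [ContinuousStar A] {I : TwoSidedIdeal A}
    (hI : IsClosed (I : Set A)) : IsClosed ((I.starCore (R := R)) : Set A) :=
  hI.inter (hI.preimage continuous_star)

lemma cfcₙ_mem {A : Type*} [CStarAlgebra A] {I : TwoSidedIdeal A} (hI : IsClosed (I : Set A))
    (f : ℝ → ℝ) {a : A} (ha : IsSelfAdjoint a) (haI : a ∈ I) : cfcₙ f a ∈ I :=
  haveI := isClosed_starCore (R := ℝ) hI
  (mem_starCore.1 <| _root_.cfcₙ_mem (𝕜' := ℝ) (s := I.starCore) f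
    (mem_starCore.2 ⟨haI, by rwa [ha.star_eq]⟩)).1

end TwoSidedIdeal

noncomputable def invFourthRootApprox (v t : ℝ) : ℝ := (t ^ (4⁻¹ : ℝ)) ^ 3 / (t + v ^ 4)

lemma exists_pow_four_eq {t : ℝ} (ht : 0 ≤ t) : ∃ u, 0 ≤ u ∧ u ^ 4 = t :=
  ⟨t ^ (4⁻¹ : ℝ), Real.rpow_nonneg ht _, by simpa using Real.rpow_inv_natCast_pow ht four_ne_zero⟩

lemma fourthRoot_pow_four {u : ℝ} (hu : 0 ≤ u) : (u ^ 4) ^ (4⁻¹ : ℝ) = u := by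
  simpa using Real.pow_rpow_inv_natCast hu four_ne_zero

lemma invFourthRootApprox_pow_four (v : ℝ) {u : ℝ} (hu : 0 ≤ u) :
    invFourthRootApprox v (u ^ 4) = u ^ 3 / (u ^ 4 + v ^ 4) := by
  rw [invFourthRootApprox, fourthRoot_pow_four hu]

lemma continuousOn_invFourthRootApprox {v : ℝ} (hv : 0 < v) :
    ContinuousOn (invFourthRootApprox v) (Ici 0) :=
  ((Real.continuous_rpow_const (by norm_num)).pow 3).continuousOn.div (by fun_prop)
    fun t ht => by have : (0 : ℝ) ≤ t := ht; positivity

lemma invFourthRootApprox_sq_mul_le_one {v t : ℝ} (hv : 0 < v) (ht0 : 0 ≤ t) (ht1 : t ≤ 1) :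
    invFourthRootApprox v t ^ 2 * t ≤ 1 ^ 2 := by
  obtain ⟨u, hu, rfl⟩ := exists_pow_four_eq ht0
  have hu1 : u ≤ 1 := (pow_le_one_iff_of_nonneg hu four_ne_zero).1 ht1
  rw [invFourthRootApprox_pow_four v hu, div_pow, div_mul_eq_mul_div, one_pow,
    div_le_one (by positivity)]
  have hu8 : u ^ 8 ≤ (u ^ 4 + v ^ 4) ^ 2 := by nlinarith [pow_pos hv 4, pow_nonneg hu 4]
  calc (u ^ 3) ^ 2 * u ^ 4 = u ^ 8 * u ^ 2 := by ring
    _ ≤ (u ^ 4 + v ^ 4) ^ 2 * 1 :=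
      mul_le_mul hu8 (pow_le_one₀ hu hu1) (by positivity) (by positivity)
    _ = _ := mul_one _

lemma abs_div_mul_sq_sub_le {u v : ℝ} (hu : 0 ≤ u) (hv : 0 < v) :
    |u ^ 3 / (u ^ 4 + v ^ 4) * u ^ 2 - u| ≤ v := by
  have hD : 0 < u ^ 4 + v ^ 4 := by positivity
  have e : u ^ 3 / (u ^ 4 + v ^ 4) * u ^ 2 - u = -(u * v ^ 4 / (u ^ 4 + v ^ 4)) := by
    field_simp
    ring
  rw [e, abs_neg, abs_of_nonneg (by positivity), div_le_iff₀ hD]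
  have h : u * v ^ 3 ≤ u ^ 4 + v ^ 4 := by
    nlinarith [sq_nonneg (u ^ 2 - v ^ 2), mul_nonneg (sq_nonneg v) (sq_nonneg (u - v))]
  nlinarith [mul_le_mul_of_nonneg_left h hv.le]

lemma sub_invFourthRootApprox_sq_mul_le {v w t : ℝ} (hv : 0 < v) (hw : 0 < w) (ht : 0 ≤ t) :
    (invFourthRootApprox v t - invFourthRootApprox w t) ^ 2 * t ≤ (v + w) ^ 2 := by
  obtain ⟨u, hu, rfl⟩ := exists_pow_four_eq ht
  rw [invFourthRootApprox_pow_four v hu, invFourthRootApprox_pow_four w hu]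
  set p := u ^ 3 / (u ^ 4 + v ^ 4) * u ^ 2 - u
  set q := u ^ 3 / (u ^ 4 + w ^ 4) * u ^ 2 - u
  have hpq : (u ^ 3 / (u ^ 4 + v ^ 4) - u ^ 3 / (u ^ 4 + w ^ 4)) ^ 2 * u ^ 4 = (p - q) ^ 2 := by
    ring
  rw [hpq, ← sq_abs]
  exact pow_le_pow_left₀ (abs_nonneg _) ((abs_sub _ _).trans
    (add_le_add (abs_div_mul_sq_sub_le hu hv) (abs_div_mul_sq_sub_le hu hw))) 2

lemma fourthRoot_mul_invFourthRootApprox_sub_one_sq_mul_le {v t : ℝ} (hv : 0 < v)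
    (ht : 0 ≤ t) : (t ^ (4⁻¹ : ℝ) * invFourthRootApprox v t - 1) ^ 2 * t ≤ (v ^ 2 / 2) ^ 2 := by
  obtain ⟨u, hu, rfl⟩ := exists_pow_four_eq ht
  rw [invFourthRootApprox_pow_four v hu, fourthRoot_pow_four hu]
  have e : (u * (u ^ 3 / (u ^ 4 + v ^ 4)) - 1) ^ 2 * u ^ 4
      = (v ^ 4) ^ 2 * u ^ 4 / (u ^ 4 + v ^ 4) ^ 2 := by
    field_simp
    ring
  rw [e, div_le_iff₀ (by positivity)]
  nlinarith [sq_nonneg (u ^ 4 - v ^ 4), pow_nonneg (sq_nonneg v) 4]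

section CStarAlgebra

variable {A : Type*} [CStarAlgebra A] [PartialOrder A] [StarOrderedRing A]

lemma norm_cfc_mul_le_of_mul_star_le {s x : A} (hs : 0 ≤ s) (hxs : x * star x ≤ s)
    {h : ℝ → ℝ} (hh : ContinuousOn h (spectrum ℝ s)) {M : ℝ} (hM : 0 ≤ M)
    (hbound : ∀ t ∈ spectrum ℝ s, h t ^ 2 * t ≤ M ^ 2) : ‖cfc h s * x‖ ≤ M := by
  set c := cfc h s
  have hc : star c = c := (cfc_predicate h s).star_eq
  have hcsc : c * s * c = cfc (fun t => h t * t * h t) s := by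
    rw [cfc_mul (fun t => h t * t) h s, cfc_mul h (fun t => t) s, cfc_id' ℝ s]
  have hsq : ‖c * x‖ ^ 2 ≤ M ^ 2 :=
    calc ‖c * x‖ ^ 2 = ‖c * (x * star x) * star c‖ := by
          rw [sq, ← CStarRing.norm_self_mul_star, star_mul, mul_assoc, mul_assoc, mul_assoc]
      _ ≤ ‖c * s * star c‖ := CStarAlgebra.norm_le_norm_of_nonneg_of_le
          (star_right_conjugate_nonneg (mul_star_self_nonneg x) c)
          (star_right_conjugate_le_conjugate hxs c)
      _ = ‖cfc (fun t => h t * t * h t) s‖ := by rw [hc, hcsc]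
      _ ≤ M ^ 2 := norm_cfc_le (by positivity) fun t ht => by
          rw [mul_right_comm, ← sq,
            Real.norm_of_nonneg (mul_nonneg (sq_nonneg _) (spectrum_nonneg_of_nonneg hs ht))]
          exact hbound t ht
  exact (pow_le_pow_iff_left₀ (norm_nonneg _) hM two_ne_zero).1 hsq

lemma continuousOn_invFourthRootApprox_spectrum {s : A} (hs : 0 ≤ s) {v : ℝ} (hv : 0 < v) :
    ContinuousOn (invFourthRootApprox v) (spectrum ℝ s) :=
  (continuousOn_invFourthRootApprox hv).mono fun _ ht => spectrum_nonneg_of_nonneg hs ht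

lemma norm_cfc_invFourthRootApprox_mul_le_one {s x : A} (hs : 0 ≤ s) (hs1 : ‖s‖ ≤ 1)
    (hxs : x * star x ≤ s) {v : ℝ} (hv : 0 < v) : ‖cfc (invFourthRootApprox v) s * x‖ ≤ 1 := by
  have hσ : ∀ t ∈ spectrum ℝ s, t ≤ 1 := (le_algebraMap_iff_spectrum_le hs.isSelfAdjoint).1
    ((CStarAlgebra.norm_le_iff_le_algebraMap s zero_le_one hs).1 hs1)
  exact norm_cfc_mul_le_of_mul_star_le hs hxs (continuousOn_invFourthRootApprox_spectrum hs hv)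
    zero_le_one fun t ht =>
      invFourthRootApprox_sq_mul_le_one hv (spectrum_nonneg_of_nonneg hs ht) (hσ t ht)

lemma dist_cfc_invFourthRootApprox_mul_le {s x : A} (hs : 0 ≤ s) (hxs : x * star x ≤ s)
    {v w : ℝ} (hv : 0 < v) (hw : 0 < w) :
    dist (cfc (invFourthRootApprox v) s * x) (cfc (invFourthRootApprox w) s * x) ≤ v + w := by
  have hcv := continuousOn_invFourthRootApprox_spectrum hs hv
  have hcw := continuousOn_invFourthRootApprox_spectrum hs hw
  rw [dist_eq_norm, ← sub_mul, ← cfc_sub _ _ s hcv hcw]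
  exact norm_cfc_mul_le_of_mul_star_le hs hxs (hcv.sub hcw) (by positivity) fun t ht =>
    sub_invFourthRootApprox_sq_mul_le hv hw (spectrum_nonneg_of_nonneg hs ht)

lemma norm_cfc_fourthRoot_mul_cfc_invFourthRootApprox_mul_sub_le {s x : A} (hs : 0 ≤ s)
    (hxs : x * star x ≤ s) {v : ℝ} (hv : 0 < v) :
    ‖cfc (fun t : ℝ => t ^ (4⁻¹ : ℝ)) s * (cfc (invFourthRootApprox v) s * x) - x‖
      ≤ v ^ 2 / 2 := by
  have hcv := continuousOn_invFourthRootApprox_spectrum hs hv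
  have hroot : Continuous fun t : ℝ => t ^ (4⁻¹ : ℝ) := Real.continuous_rpow_const (by norm_num)
  have hprod := hroot.continuousOn.mul hcv
  rw [← mul_assoc, ← cfc_mul _ _ s hroot.continuousOn hcv, ← sub_one_mul, ← cfc_const_one ℝ s,
    ← cfc_sub (fun t => t ^ (4⁻¹ : ℝ) * invFourthRootApprox v t) (fun _ => 1) s hprod
      continuousOn_const]
  exact norm_cfc_mul_le_of_mul_star_le hs hxs (hprod.sub continuousOn_const) (by positivity)
    fun t ht =>
      fourthRoot_mul_invFourthRootApprox_sub_one_sq_mul_le hv (spectrum_nonneg_of_nonneg hs ht)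

theorem exists_mem_closure_eq_cfc_fourthRoot_mul {s x : A} (hs : 0 ≤ s) (hs1 : ‖s‖ ≤ 1)
    (hxs : x * star x ≤ s) : ∃ c ∈ closure (range (· * x)), ‖c‖ ≤ 1 ∧
      x = cfc (fun t : ℝ => t ^ (4⁻¹ : ℝ)) s * c := by
  set v : ℕ → ℝ := fun k => 1 / ((k : ℝ) + 1)
  have hv : ∀ k, 0 < v k := fun k => by positivity
  have hv0 : Tendsto v atTop (𝓝 0) := tendsto_one_div_add_atTop_nhds_zero_nat
  set d : ℕ → A := fun k => cfc (invFourthRootApprox (v k)) s * x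
  obtain ⟨c, hdc⟩ := cauchySeq_tendsto_of_complete <| cauchySeq_of_dist_le_add
    (fun k l => dist_cfc_invFourthRootApprox_mul_le hs hxs (hv k) (hv l)) hv0
  refine ⟨c, mem_closure_of_tendsto hdc (.of_forall fun k => mem_range_self _),
    le_of_tendsto hdc.norm
      (.of_forall fun k => norm_cfc_invFourthRootApprox_mul_le_one hs hs1 hxs (hv k)), ?_⟩
  have hbd : Tendsto (fun k => cfc (fun t : ℝ => t ^ (4⁻¹ : ℝ)) s * d k) atTop (𝓝 x) := by
    rw [tendsto_iff_norm_sub_tendsto_zero]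
    refine squeeze_zero (fun k => norm_nonneg _)
      (fun k => norm_cfc_fourthRoot_mul_cfc_invFourthRootApprox_mul_sub_le hs hxs (hv k)) ?_
    simpa using (hv0.pow 2).div_const 2
  exact tendsto_nhds_unique hbd (hdc.const_mul _)

end CStarAlgebra

/-- Kadison–Ringrose, Exercise 4.6.40: factorization of a square-summable
sequence in a closed two-sided ideal of a C*-algebra. -/
theorem stmt4 {A : Type*} [NormedRing A] [StarRing A] [CStarRing A] [CompleteSpace A]
    [NormedAlgebra ℂ A] [StarModule ℂ A] [PartialOrder A] [StarOrderedRing A]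
    (I : TwoSidedIdeal A) (hI : IsClosed (I : Set A))
    (a : ℕ → A) (ha : ∀ n, a n ∈ I)
    (hsum : Summable fun n => ‖a n‖ ^ 2) (hle : (∑' n, ‖a n‖ ^ 2) ≤ 1) :
    ∃ b : A, b ∈ I ∧ 0 ≤ b ∧ ∃ c : ℕ → A,
      ∀ n, c n ∈ I ∧ ‖c n‖ ≤ 1 ∧ a n = b * c n := by
  let _ : CStarAlgebra A := { ‹NormedRing A›, ‹StarRing A›, ‹CStarRing A›, ‹NormedAlgebra ℂ A›,
    ‹StarModule ℂ A› with complete := ‹CompleteSpace A›.complete }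
  have hnorm : ∀ n, ‖a n * star (a n)‖ = ‖a n‖ ^ 2 := fun n => by
    rw [CStarRing.norm_self_mul_star, sq]
  have hsumm : Summable fun n => ‖a n * star (a n)‖ := by simpa only [hnorm] using hsum
  set s := ∑' n, a n * star (a n)
  have hs : 0 ≤ s := tsum_nonneg fun n => mul_star_self_nonneg (a n)
  have hs1 : ‖s‖ ≤ 1 := (norm_tsum_le_tsum_norm hsumm).trans (by simpa only [hnorm] using hle)
  have hsI : s ∈ I := tsum_mem hI fun n => I.mul_mem_right _ _ (ha n)
  have hxs : ∀ n, a n * star (a n) ≤ s := fun n =>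
    (Summable.of_norm hsumm).le_tsum n fun m _ => mul_star_self_nonneg (a m)
  choose c hcx hc1 hc using fun n => exists_mem_closure_eq_cfc_fourthRoot_mul hs hs1 (hxs n)
  refine ⟨_, ?_, cfc_nonneg fun t ht => Real.rpow_nonneg (spectrum_nonneg_of_nonneg hs ht) _, c,
    fun n => ⟨closure_minimal (range_subset_iff.2 fun y => I.mul_mem_left _ _ (ha n)) hI (hcx n),
      hc1 n, hc n⟩⟩
  rw [← cfcₙ_eq_cfc (Real.continuous_rpow_const (by norm_num)).continuousOn
    (Real.zero_rpow (by norm_num))]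
  exact I.cfcₙ_mem hI _ hs.isSelfAdjoint hsI
end

section
/- Let φ : A → B be a surjective *-homomorphism of C*-algebras and let (bⱼ) be a sequence of positive elements of B with bⱼbₖ = 0 for j ≠ k. Then there is a sequence (aⱼ) of positive elements of A with aⱼaₖ = 0 for j ≠ k and φ(aⱼ) = bⱼ for every j. -/
/-!
Rescale `b` to a summable sequence and let `d n = ∑_{k ≥ n} b k / μ k`; then `b n` and `d (n + 1)`
are orthogonal and both lie below `μ n • d n`. Starting from a positive lift of `d 0`, lift `b n`
and `d (n + 1)` together, as the positive and negative parts of a lift of `b n - d (n + 1)`, so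
that every `y` with `y t = 0`, `t` the current lift of `μ n • d n`, also annihilates both new
lifts. By induction the lift of `b j` then annihilates every later lift of a tail, hence every
later lift of a `b k`. Such lifts below `φ t` exist by Pedersen's factorization `x = u T^{1/4}`
for `x⋆x ≤ T`.
-/

open Filter Topology Function

noncomputable def quarterRoot (s : ℝ) : ℝ := √(√s)

/-- `s ↦ s ^ (-1/4)`, truncated near the origin so as to stay continuous. -/
noncomputable def invQuarterRootApprox (e s : ℝ) : ℝ := quarterRoot s ^ 3 / max s e

lemma continuous_quarterRoot : Continuous quarterRoot :=
  Real.continuous_sqrt.comp Real.continuous_sqrt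

lemma quarterRoot_sq (s : ℝ) : quarterRoot s ^ 2 = √s :=
  Real.sq_sqrt (Real.sqrt_nonneg s)

lemma quarterRoot_pow_four {s : ℝ} (hs : 0 ≤ s) : quarterRoot s ^ 4 = s := by
  rw [show 4 = 2 * 2 from rfl, pow_mul, quarterRoot_sq, Real.sq_sqrt hs]

lemma continuous_invQuarterRootApprox {e : ℝ} (he : 0 < e) :
    Continuous (invQuarterRootApprox e) :=
  (continuous_quarterRoot.pow 3).div (continuous_id.max continuous_const) fun _ =>
    (he.trans_le (le_max_right _ _)).ne'

lemma invQuarterRootApprox_nonneg {e : ℝ} (he : 0 < e) (s : ℝ) :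
    0 ≤ invQuarterRootApprox e s :=
  div_nonneg (pow_nonneg (Real.sqrt_nonneg _) 3) (he.le.trans (le_max_right _ _))

lemma invQuarterRootApprox_le {e s : ℝ} (hs : 0 < s) :
    invQuarterRootApprox e s ≤ (quarterRoot s)⁻¹ := by
  have hq : 0 < quarterRoot s := Real.sqrt_pos.2 (Real.sqrt_pos.2 hs)
  calc invQuarterRootApprox e s ≤ quarterRoot s ^ 3 / s :=
        div_le_div_of_nonneg_left (by positivity) hs (le_max_left _ _)
    _ = (quarterRoot s)⁻¹ := by
        field_simp
        linear_combination quarterRoot_pow_four hs.le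

lemma invQuarterRootApprox_mul_quarterRoot {e s : ℝ} (hs : 0 ≤ s) :
    invQuarterRootApprox e s * quarterRoot s = s / max s e := by
  rw [invQuarterRootApprox, div_mul_eq_mul_div, ← pow_succ, quarterRoot_pow_four hs]

lemma sq_sub_invQuarterRootApprox_mul_le {e₁ e₂ E s : ℝ} (h₁ : 0 < e₁) (h₂ : 0 < e₂)
    (h₁E : e₁ ≤ E) (h₂E : e₂ ≤ E) (hs : 0 ≤ s) :
    (invQuarterRootApprox e₁ s - invQuarterRootApprox e₂ s) ^ 2 * s ≤ √E := by
  rcases le_or_gt E s with hEs | hsE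
  · rw [invQuarterRootApprox, invQuarterRootApprox, max_eq_left (h₁E.trans hEs),
      max_eq_left (h₂E.trans hEs), sub_self]
    simp [Real.sqrt_nonneg]
  rcases hs.eq_or_lt with rfl | hs
  · simp [Real.sqrt_nonneg]
  have habs : |invQuarterRootApprox e₁ s - invQuarterRootApprox e₂ s| ≤ (quarterRoot s)⁻¹ :=
    abs_sub_le_of_nonneg_of_le (invQuarterRootApprox_nonneg h₁ s) (invQuarterRootApprox_le hs)
      (invQuarterRootApprox_nonneg h₂ s) (invQuarterRootApprox_le hs)
  calc (invQuarterRootApprox e₁ s - invQuarterRootApprox e₂ s) ^ 2 * s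
      ≤ (quarterRoot s)⁻¹ ^ 2 * s :=
        mul_le_mul_of_nonneg_right (sq_le_sq.2 (habs.trans (le_abs_self _))) hs.le
    _ = √s := by rw [inv_pow, quarterRoot_sq, inv_mul_eq_div, Real.div_sqrt]
    _ ≤ √E := Real.sqrt_le_sqrt hsE.le

lemma sq_invQuarterRootApprox_mul_quarterRoot_sub_one_mul_le {e s : ℝ} (he : 0 < e)
    (hs : 0 ≤ s) : (invQuarterRootApprox e s * quarterRoot s - 1) ^ 2 * s ≤ e := by
  rw [invQuarterRootApprox_mul_quarterRoot hs]
  rcases le_or_gt e s with hes | hse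
  · rw [max_eq_left hes, div_self (he.trans_le hes).ne']
    simpa using he.le
  · rw [max_eq_right hse.le]
    have h₀ : 0 ≤ s / e := div_nonneg hs he.le
    have h₁ : s / e ≤ 1 := (div_le_one he).2 hse.le
    calc (s / e - 1) ^ 2 * s ≤ 1 * s := by gcongr; nlinarith
      _ ≤ e := by linarith

section CStarAlgebra

variable {A : Type*} [CStarAlgebra A] [PartialOrder A] [StarOrderedRing A]

lemma mul_sqrt_eq_zero {y t : A} (ht : 0 ≤ t) (h : y * t = 0) : y * CFC.sqrt t = 0 := by
  have hsqrt : star (y * CFC.sqrt t) = CFC.sqrt t * star y := by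
    rw [star_mul, (CFC.sqrt_nonneg t).isSelfAdjoint.star_eq]
  have : (y * CFC.sqrt t) * star (y * CFC.sqrt t) = 0 := by
    rw [hsqrt, mul_assoc, ← mul_assoc (CFC.sqrt t), CFC.sqrt_mul_sqrt_self t, ← mul_assoc, h,
      zero_mul]
  rwa [← norm_eq_zero, CStarRing.norm_self_mul_star, mul_self_eq_zero, norm_eq_zero] at this

lemma mul_abs_eq_zero {y h : A} (hh : IsSelfAdjoint h) (hyh : y * h = 0) :
    y * CFC.abs h = 0 := by
  rw [CFC.abs, hh.star_eq]
  exact mul_sqrt_eq_zero hh.mul_self_nonneg (by rw [← mul_assoc, hyh, zero_mul])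

lemma mul_posPart_eq_zero {y h : A} (hh : IsSelfAdjoint h) (hyh : y * h = 0) : y * h⁺ = 0 := by
  have : y * (2 • h⁺) = 0 := by
    rw [← CFC.abs_add_self h, mul_add, mul_abs_eq_zero hh hyh, hyh, add_zero]
  rwa [mul_smul_comm, two_nsmul, ← two_smul ℝ, smul_eq_zero_iff_right two_ne_zero] at this

lemma mul_negPart_eq_zero {y h : A} (hh : IsSelfAdjoint h) (hyh : y * h = 0) : y * h⁻ = 0 := by
  rw [← sub_sub_cancel h⁺ h⁻, CFC.posPart_sub_negPart h, mul_sub, mul_posPart_eq_zero hh hyh, hyh,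
    sub_zero]

lemma norm_mul_cfc_le_sqrt {x T : A} (hT : 0 ≤ T) (hx : star x * x ≤ T) {f : ℝ → ℝ}
    (hf : Continuous f) {c : ℝ} (hc : 0 ≤ c) (hfc : ∀ s ∈ spectrum ℝ T, f s ^ 2 * s ≤ c) :
    ‖x * cfc f T‖ ≤ √c := by
  have hfT : IsSelfAdjoint (cfc f T) := cfc_predicate f T
  have hconj : cfc (fun s => f s ^ 2 * s) T = cfc f T * T * cfc f T := by
    rw [cfc_congr (g := fun s => f s * s * f s) fun s _ => by ring,
      cfc_mul _ f T, cfc_mul f (fun s => s) T, cfc_id' ℝ T]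
  have hle : star (x * cfc f T) * (x * cfc f T) ≤ cfc (fun s => f s ^ 2 * s) T :=
    calc star (x * cfc f T) * (x * cfc f T) = star (cfc f T) * (star x * x) * cfc f T := by
          simp only [star_mul, mul_assoc]
      _ ≤ star (cfc f T) * T * cfc f T := star_left_conjugate_le_conjugate hx _
      _ = cfc (fun s => f s ^ 2 * s) T := by rw [hfT.star_eq, hconj]
  rw [Real.le_sqrt (norm_nonneg _) hc, sq, ← CStarRing.norm_star_mul_self]
  refine (CStarAlgebra.norm_le_norm_of_nonneg_of_le (star_mul_self_nonneg _) hle).trans ?_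
  refine norm_cfc_le hc fun s hs => ?_
  have hs₀ : 0 ≤ s := spectrum_nonneg_of_nonneg hT hs
  rw [Real.norm_of_nonneg (by positivity)]
  exact hfc s hs

lemma cfc_quarterRoot {T : A} (hT : 0 ≤ T) : cfc quarterRoot T = CFC.sqrt (CFC.sqrt T) := by
  rw [CFC.sqrt_eq_real_sqrt (CFC.sqrt T), CFC.sqrt_eq_real_sqrt T, cfcₙ_eq_cfc, cfcₙ_eq_cfc,
    ← cfc_comp' Real.sqrt Real.sqrt T]
  rfl

variable {x T : A} (hT : 0 ≤ T) (hx : star x * x ≤ T)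
include hT hx

lemma dist_mul_cfc_invQuarterRootApprox_le {e₁ e₂ E : ℝ} (h₁ : 0 < e₁) (h₂ : 0 < e₂)
    (h₁E : e₁ ≤ E) (h₂E : e₂ ≤ E) :
    dist (x * cfc (invQuarterRootApprox e₁) T) (x * cfc (invQuarterRootApprox e₂) T) ≤
      quarterRoot E := by
  have hg₁ := continuous_invQuarterRootApprox h₁
  have hg₂ := continuous_invQuarterRootApprox h₂
  rw [dist_eq_norm, ← mul_sub, ← cfc_sub _ _ T hg₁.continuousOn hg₂.continuousOn]
  exact norm_mul_cfc_le_sqrt hT hx (hg₁.sub hg₂) (Real.sqrt_nonneg E) fun s hs =>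
    sq_sub_invQuarterRootApprox_mul_le h₁ h₂ h₁E h₂E (spectrum_nonneg_of_nonneg hT hs)

lemma norm_mul_cfc_invQuarterRootApprox_mul_sub_le {e : ℝ} (he : 0 < e) :
    ‖x * cfc (invQuarterRootApprox e) T * cfc quarterRoot T - x‖ ≤ √e := by
  have hg := continuous_invQuarterRootApprox he
  have : x * cfc (invQuarterRootApprox e) T * cfc quarterRoot T - x =
      x * cfc (fun s => invQuarterRootApprox e s * quarterRoot s - 1) T := by
    rw [cfc_sub (fun s => invQuarterRootApprox e s * quarterRoot s) (fun _ => 1) T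
      (hg.mul continuous_quarterRoot).continuousOn continuousOn_const, cfc_const_one ℝ T,
      cfc_mul _ _ T hg.continuousOn continuous_quarterRoot.continuousOn, mul_sub, mul_one,
      mul_assoc]
  rw [this]
  exact norm_mul_cfc_le_sqrt hT hx ((hg.mul continuous_quarterRoot).sub continuous_const) he.le
    fun s hs => sq_invQuarterRootApprox_mul_quarterRoot_sub_one_mul_le he
      (spectrum_nonneg_of_nonneg hT hs)

/-- Pedersen's factorization, with `u = lim x g_n(T)` for truncations `g_n` of `s ↦ s^{-1/4}`. -/
lemma exists_eq_mul_sqrt_sqrt : ∃ u : A, x = u * CFC.sqrt (CFC.sqrt T) := by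
  set e : ℕ → ℝ := fun n => 1 / (n + 1)
  have he : Tendsto e atTop (𝓝 0) := tendsto_one_div_add_atTop_nhds_zero_nat
  have he_pos (n : ℕ) : 0 < e n := Nat.one_div_pos_of_nat
  set u : ℕ → A := fun n => x * cfc (invQuarterRootApprox (e n)) T
  have hu : CauchySeq u := by
    refine cauchySeq_of_le_tendsto_0 (fun N => quarterRoot (e N)) (fun n m N hn hm =>
      dist_mul_cfc_invQuarterRootApprox_le hT hx (he_pos n) (he_pos m)
        (Nat.one_div_le_one_div hn) (Nat.one_div_le_one_div hm)) ?_
    exact (continuous_quarterRoot.tendsto' 0 0 (by simp [quarterRoot])).comp he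
  obtain ⟨v, hv⟩ := cauchySeq_tendsto_of_complete hu
  refine ⟨v, cfc_quarterRoot hT ▸ tendsto_nhds_unique ?_ (hv.mul_const _)⟩
  rw [tendsto_iff_norm_sub_tendsto_zero]
  refine squeeze_zero (fun n => norm_nonneg _)
    (fun n => norm_mul_cfc_invQuarterRootApprox_mul_sub_le hT hx (he_pos n)) ?_
  exact (Real.continuous_sqrt.tendsto' 0 0 Real.sqrt_zero).comp he

end CStarAlgebra

section Lift

variable {A B : Type*} [CStarAlgebra A] [PartialOrder A] [StarOrderedRing A]
  [CStarAlgebra B] [PartialOrder B] [StarOrderedRing B] {φ : A →⋆ₐ[ℂ] B}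

lemma exists_nonneg_map_eq (hφ : Surjective φ) {d : B} (hd : 0 ≤ d) :
    ∃ w : A, 0 ≤ w ∧ φ w = d := by
  obtain ⟨z, hz⟩ := hφ (CFC.sqrt d)
  refine ⟨star z * z, star_mul_self_nonneg z, ?_⟩
  rw [map_mul, map_star, hz, (CFC.sqrt_nonneg d).isSelfAdjoint.star_eq, CFC.sqrt_mul_sqrt_self d]

lemma map_sqrt {t : A} (ht : 0 ≤ t) : φ (CFC.sqrt t) = CFC.sqrt (φ t) :=
  have := map_nonneg φ ht
  NonUnitalStarAlgHom.map_cfcₙ (φ : A →⋆ₙₐ[ℂ] B) _ t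

lemma map_posPart {h : A} (hh : IsSelfAdjoint h) : φ h⁺ = (φ h)⁺ :=
  have := hh.map φ
  NonUnitalStarAlgHom.map_cfcₙ (φ : A →⋆ₙₐ[ℂ] B) _ h

lemma map_negPart {h : A} (hh : IsSelfAdjoint h) : φ h⁻ = (φ h)⁻ :=
  have := hh.map φ
  NonUnitalStarAlgHom.map_cfcₙ (φ : A →⋆ₙₐ[ℂ] B) _ h

/-- Factor `√d = u (φ t)^{1/4}` and lift `d = (φ t)^{1/4} u⋆u (φ t)^{1/4}` to
`t^{1/4} w t^{1/4}`. -/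
lemma exists_nonneg_map_eq_of_le (hφ : Surjective φ) {t : A} (ht : 0 ≤ t) {d : B} (hd : 0 ≤ d)
    (hdt : d ≤ φ t) : ∃ s : A, 0 ≤ s ∧ φ s = d ∧ ∀ y : A, y * t = 0 → y * s = 0 := by
  have hsqrt_d : star (CFC.sqrt d) * CFC.sqrt d = d := by
    rw [(CFC.sqrt_nonneg d).isSelfAdjoint.star_eq, CFC.sqrt_mul_sqrt_self d]
  obtain ⟨u, hu⟩ := exists_eq_mul_sqrt_sqrt (map_nonneg φ ht) (hsqrt_d.trans_le hdt)
  obtain ⟨w, hw, hwu⟩ := exists_nonneg_map_eq hφ (star_mul_self_nonneg u)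
  set r := CFC.sqrt (CFC.sqrt t)
  have hr : IsSelfAdjoint r := (CFC.sqrt_nonneg _).isSelfAdjoint
  refine ⟨r * w * r, hr.conjugate_nonneg hw, ?_, fun y hy => ?_⟩
  · have hφr : φ r = CFC.sqrt (CFC.sqrt (φ t)) := by
      rw [map_sqrt (CFC.sqrt_nonneg t), map_sqrt ht]
    rw [map_mul, map_mul, hφr, hwu, ← hsqrt_d, hu, star_mul,
      (CFC.sqrt_nonneg (CFC.sqrt (φ t))).isSelfAdjoint.star_eq]
    simp only [mul_assoc]
  · have hyr : y * r = 0 := mul_sqrt_eq_zero (CFC.sqrt_nonneg t) (mul_sqrt_eq_zero ht hy)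
    rw [← mul_assoc, ← mul_assoc, hyr, zero_mul, zero_mul]

lemma exists_orthogonal_nonneg_map_eq_of_le (hφ : Surjective φ) {t : A} (ht : 0 ≤ t) {b c : B}
    (hb : 0 ≤ b) (hc : 0 ≤ c) (hbc : b * c = 0) (hbt : b ≤ φ t) (hct : c ≤ φ t) :
    ∃ a a' : A, 0 ≤ a ∧ 0 ≤ a' ∧ φ a = b ∧ φ a' = c ∧ a * a' = 0 ∧
      ∀ y : A, y * t = 0 → y * a = 0 ∧ y * a' = 0 := by
  obtain ⟨sb, hsb, hsbφ, hsbt⟩ := exists_nonneg_map_eq_of_le hφ ht hb hbt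
  obtain ⟨sc, hsc, hscφ, hsct⟩ := exists_nonneg_map_eq_of_le hφ ht hc hct
  have hh : IsSelfAdjoint (sb - sc) := hsb.isSelfAdjoint.sub hsc.isSelfAdjoint
  obtain ⟨hpos, hneg⟩ := CFC.posPart_negPart_unique (a := φ (sb - sc)) (by
    rw [map_sub, hsbφ, hscφ]) hbc hb hc
  refine ⟨(sb - sc)⁺, (sb - sc)⁻, CFC.posPart_nonneg _, CFC.negPart_nonneg _,
    (map_posPart hh).trans hpos, (map_negPart hh).trans hneg, CFC.posPart_mul_negPart _,
    fun y hy => ?_⟩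
  have hyh : y * (sb - sc) = 0 := by rw [mul_sub, hsbt y hy, hsct y hy, sub_zero]
  exact ⟨mul_posPart_eq_zero hh hyh, mul_negPart_eq_zero hh hyh⟩

end Lift

section Sequence

variable {A B : Type*} [CStarAlgebra A] [PartialOrder A] [StarOrderedRing A]
  [CStarAlgebra B] [PartialOrder B] [StarOrderedRing B]

lemma mul_eq_zero_comm_of_nonneg {a a' : A} (ha : 0 ≤ a) (ha' : 0 ≤ a') (h : a * a' = 0) :
    a' * a = 0 := by
  simpa [ha.isSelfAdjoint.star_eq, ha'.isSelfAdjoint.star_eq] using congrArg star h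

lemma exists_orthogonal_lift_of_tails {φ : A →⋆ₐ[ℂ] B} (hφ : Surjective φ) {b d : ℕ → B}
    {μ : ℕ → ℝ} (hb : ∀ n, 0 ≤ b n) (hd : ∀ n, 0 ≤ d n) (hμ : ∀ n, 0 ≤ μ n)
    (hbd : ∀ n, b n * d (n + 1) = 0) (hb_le : ∀ n, b n ≤ μ n • d n)
    (hd_le : ∀ n, d (n + 1) ≤ μ n • d n) :
    ∃ a : ℕ → A, (∀ j, 0 ≤ a j) ∧ (∀ j k, j ≠ k → a j * a k = 0) ∧ ∀ j, φ (a j) = b j := by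
  have step (n : ℕ) (t : A) (ht : 0 ≤ t) (hφt : φ t = d n) : ∃ a t' : A, 0 ≤ a ∧ 0 ≤ t' ∧
      φ a = b n ∧ φ t' = d (n + 1) ∧ a * t' = 0 ∧ ∀ y : A, y * t = 0 → y * a = 0 ∧ y * t' = 0 := by
    have hφμt : φ (μ n • t) = μ n • d n := by rw [LinearMapClass.map_smul_of_tower, hφt]
    obtain ⟨a, t', ha, ht', hφa, hφt', hat', hher⟩ := exists_orthogonal_nonneg_map_eq_of_le hφ
      (smul_nonneg (hμ n) ht) (hb n) (hd (n + 1)) (hbd n) (hφμt ▸ hb_le n) (hφμt ▸ hd_le n)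
    exact ⟨a, t', ha, ht', hφa, hφt', hat', fun y hy =>
      hher y (by rw [mul_smul_comm, hy, smul_zero])⟩
  choose! lift next hlift using step
  obtain ⟨t₀, ht₀, hφt₀⟩ := exists_nonneg_map_eq hφ (hd 0)
  let t : ℕ → A := fun n => Nat.rec t₀ next n
  have ht (n : ℕ) : 0 ≤ t n ∧ φ (t n) = d n := by
    induction n with
    | zero => exact ⟨ht₀, hφt₀⟩
    | succ n ih => exact ⟨(hlift n _ ih.1 ih.2).2.1, (hlift n _ ih.1 ih.2).2.2.2.1⟩
  let a : ℕ → A := fun n => lift n (t n)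
  have hlift' (n : ℕ) := hlift n (t n) (ht n).1 (ht n).2
  have hat {j n : ℕ} (hjn : j < n) : a j * t n = 0 := by
    induction n, hjn using Nat.le_induction with
    | base => exact (hlift' j).2.2.2.2.1
    | succ n _ ih => exact ((hlift' n).2.2.2.2.2 (a j) ih).2
  have haa {j k : ℕ} (hjk : j < k) : a j * a k = 0 := ((hlift' k).2.2.2.2.2 (a j) (hat hjk)).1
  refine ⟨a, fun j => (hlift' j).1, fun j k hjk => ?_, fun j => (hlift' j).2.2.1⟩
  rcases hjk.lt_or_gt with h | h
  · exact haa h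
  · exact mul_eq_zero_comm_of_nonneg (hlift' k).1 (hlift' j).1 (haa h)

lemma exists_tail_sums {b : ℕ → B} (hb : ∀ n, 0 ≤ b n)
    (horth : ∀ j k, j ≠ k → b j * b k = 0) :
    ∃ (d : ℕ → B) (μ : ℕ → ℝ), (∀ n, 0 ≤ d n) ∧ (∀ n, 0 ≤ μ n) ∧
      (∀ n, b n * d (n + 1) = 0) ∧ (∀ n, b n ≤ μ n • d n) ∧ (∀ n, d (n + 1) ≤ μ n • d n) := by
  set μ : ℕ → ℝ := fun n => 2 ^ n * (1 + ‖b n‖)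
  have hμ (n : ℕ) : 1 ≤ μ n :=
    one_le_mul_of_one_le_of_one_le (one_le_pow₀ one_le_two)
      (le_add_of_nonneg_right (norm_nonneg _))
  have hμ₀ (n : ℕ) : 0 < μ n := zero_lt_one.trans_le (hμ n)
  set c : ℕ → B := fun n => (μ n)⁻¹ • b n
  have hc (n : ℕ) : 0 ≤ c n := smul_nonneg (inv_nonneg.2 (hμ₀ n).le) (hb n)
  have hsum : Summable c := by
    refine Summable.of_norm_bounded summable_geometric_two fun n => ?_
    rw [norm_smul, Real.norm_of_nonneg (inv_nonneg.2 (hμ₀ n).le), inv_mul_le_iff₀ (hμ₀ n),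
      one_div, inv_pow]
    show ‖b n‖ ≤ 2 ^ n * (1 + ‖b n‖) * (2 ^ n)⁻¹
    rw [mul_right_comm, mul_inv_cancel₀ (by positivity), one_mul]
    linarith
  set d : ℕ → B := fun n => ∑' k, c (k + n)
  have hsum_d (n : ℕ) : Summable fun k => c (k + n) := (summable_nat_add_iff n).2 hsum
  have hd_succ (n : ℕ) : μ n • d n = b n + μ n • d (n + 1) := by
    simp only [d]
    rw [(hsum_d n).tsum_eq_zero_add, smul_add, zero_add, smul_inv_smul₀ (hμ₀ n).ne']
    simp only [Nat.add_right_comm _ 1 n]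
    rfl
  have hd (n : ℕ) : 0 ≤ d n := tsum_nonneg fun k => hc (k + n)
  refine ⟨d, μ, hd, fun n => (hμ₀ n).le, fun n => ?_, fun n => ?_, fun n => ?_⟩
  · simp only [d]
    rw [← (hsum_d (n + 1)).tsum_mul_left]
    refine (tsum_congr fun k => ?_).trans tsum_zero
    rw [mul_smul_comm, horth n _ (by omega), smul_zero]
  · rw [hd_succ]
    exact le_add_of_nonneg_right (smul_nonneg (hμ₀ n).le (hd (n + 1)))
  · rw [hd_succ]
    exact (le_smul_of_one_le_left (hd (n + 1)) (hμ n)).trans (le_add_of_nonneg_left (hb n))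

end Sequence

/-- Kadison–Ringrose, Exercise 4.6.20: pairwise orthogonal positive sequences
lift along surjective *-homomorphisms of C*-algebras. -/
theorem stmt6 {A B : Type*}
    [NormedRing A] [StarRing A] [CStarRing A] [CompleteSpace A]
    [NormedAlgebra ℂ A] [StarModule ℂ A] [PartialOrder A] [StarOrderedRing A]
    [NormedRing B] [StarRing B] [CStarRing B] [CompleteSpace B]
    [NormedAlgebra ℂ B] [StarModule ℂ B] [PartialOrder B] [StarOrderedRing B]
    (φ : A →⋆ₐ[ℂ] B) (hφ : Function.Surjective φ)
    (b : ℕ → B) (hb : ∀ j, 0 ≤ b j) (horth : ∀ j k, j ≠ k → b j * b k = 0) :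
    ∃ a : ℕ → A, (∀ j, 0 ≤ a j) ∧ (∀ j k, j ≠ k → a j * a k = 0) ∧
      ∀ j, φ (a j) = b j := by
  let : CStarAlgebra A := {}
  let : CStarAlgebra B := {}
  obtain ⟨d, μ, hd, hμ, hbd, hb_le, hd_le⟩ := exists_tail_sums hb horth
  exact exists_orthogonal_lift_of_tails hφ hb hd hμ hbd hb_le hd_le
end

section
/- Let A be a C*-algebra, B a Banach algebra, M a Banach B-bimodule, and D₁ : A → M an (E, F, G, H)-derivation where E, H : A → M are linear and F, G : A → B are continuous at zero. Assume (G(ab) − G(a)G(b))H(c) = 0 for all a, b, c ∈ A. Then the set I = { a ∈ A : t ↦ D₁(at) is continuous } equals the set V = { a ∈ A : t ↦ G(a)H(t) is continuous }. -/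
open MulOpposite

/-!
Writing `D₁(at) = E(a)F(t) + G(a)H(t)`, the first summand is additive in `t`, being the difference
of the additive maps `t ↦ D₁(at)` and `t ↦ G(a)H(t)`, and it is continuous at `0` because `F` is.
An additive map between topological groups that is continuous at `0` is continuous, so the two
summands of `t ↦ D₁(at)` differ by a continuous map and are continuous together.
-/

section

variable {A B M : Type*} [NonUnitalNonAssocRing A] [TopologicalSpace A] [IsTopologicalAddGroup A]
  [TopologicalSpace B] [AddCommGroup M] [TopologicalSpace M] [IsTopologicalAddGroup M]
  [DistribSMul B M] [SMul Bᵐᵒᵖ M] [ContinuousSMul Bᵐᵒᵖ M]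
  {D₁ E H : A → M} {F G : A → B}

theorem continuous_op_smul_of_map_mul_eq (hD₁ : ∀ s t, D₁ (s + t) = D₁ s + D₁ t)
    (hH : ∀ s t, H (s + t) = H s + H t) (hF : ContinuousAt F 0)
    (hid : ∀ a b, D₁ (a * b) = op (F b) • E a + G a • H b) (a : A) :
    Continuous fun t => op (F t) • E a := by
  have hsub : ∀ t, op (F t) • E a = D₁ (a * t) - G a • H t :=
    fun t => eq_sub_of_add_eq (hid a t).symm
  let φ : A →+ M := AddMonoidHom.mk' (fun t => op (F t) • E a) fun s t => by
    simp only [hsub, mul_add, hD₁, hH, smul_add]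
    abel
  exact continuous_of_continuousAt_zero φ
    ((continuous_op.smul continuous_const).continuousAt.comp hF)

theorem continuous_map_mul_left_iff (hD₁ : ∀ s t, D₁ (s + t) = D₁ s + D₁ t)
    (hH : ∀ s t, H (s + t) = H s + H t) (hF : ContinuousAt F 0)
    (hid : ∀ a b, D₁ (a * b) = op (F b) • E a + G a • H b) (a : A) :
    (Continuous fun t => D₁ (a * t)) ↔ Continuous fun t => G a • H t := by
  have hφ := continuous_op_smul_of_map_mul_eq hD₁ hH hF hid a
  simp only [hid]
  exact ⟨fun h => (h.sub hφ).congr fun t => add_sub_cancel_left _ _, hφ.add⟩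

end

theorem stmt7_general {A B M : Type*}
    [NormedRing A] [NormedAlgebra ℂ A]
    [NormedRing B]
    [NormedAddCommGroup M] [NormedSpace ℂ M]
    [Module B M] [Module Bᵐᵒᵖ M]
    [IsBoundedSMul Bᵐᵒᵖ M]
    (D₁ E H : A → M) (F G : A → B)
    (hD₁ : IsLinearMap ℂ D₁) (hH : IsLinearMap ℂ H)
    (hF : ContinuousAt F 0)
    (hid : ∀ a b : A, D₁ (a * b) = op (F b) • E a + G a • H b) :
    {a : A | Continuous fun t => D₁ (a * t)} =
      {a : A | Continuous fun t => G a • H t} :=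
  Set.ext fun a => continuous_map_mul_left_iff hD₁.map_add hH.map_add hF hid a

/-- under the hypothesis `(G(ab) - G(a)G(b))H(c) = 0`, the set
`I = { a | t ↦ D₁(at) is continuous }` equals `V = { a | t ↦ G(a)H(t) is continuous }`. -/
theorem stmt7 {A B M : Type*}
    [NormedRing A] [StarRing A] [CStarRing A] [CompleteSpace A]
    [NormedAlgebra ℂ A] [StarModule ℂ A]
    [NormedRing B] [NormedAlgebra ℂ B] [CompleteSpace B]
    [NormedAddCommGroup M] [NormedSpace ℂ M] [CompleteSpace M]
    [Module B M] [Module Bᵐᵒᵖ M] [SMulCommClass B Bᵐᵒᵖ M]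
    [SMulCommClass ℂ B M] [SMulCommClass ℂ Bᵐᵒᵖ M]
    [IsBoundedSMul B M] [IsBoundedSMul Bᵐᵒᵖ M]
    (D₁ E H : A → M) (F G : A → B)
    (hD₁ : IsLinearMap ℂ D₁) (hE : IsLinearMap ℂ E) (hH : IsLinearMap ℂ H)
    (hF : ContinuousAt F 0) (hG : ContinuousAt G 0)
    (hid : ∀ a b : A, D₁ (a * b) = op (F b) • E a + G a • H b)
    (hGH : ∀ a b c : A, (G (a * b) - G a * G b) • H c = 0) :
    {a : A | Continuous fun t => D₁ (a * t)} =
      {a : A | Continuous fun t => G a • H t} :=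
  stmt7_general D₁ E H F G hD₁ hH hF hid
end

section
/- Let A be a C*-algebra, B a Banach algebra, M a Banach B-bimodule, and D₁ : A → M an (E, F, G, H)-derivation with E, H linear and F, G continuous at zero, satisfying (G(ab) − G(a)G(b))H(c) = 0 for all a, b, c ∈ A. Then I = { a ∈ A : t ↦ D₁(at) is continuous } is a closed two-sided ideal of A. -/
/-!
Since `D₁(at) = F(t)E(a) + G(a)H(t)` and `F(t)E(a) → F(0)E(a) = 0` as `t → 0`, the element `a`
lies in `I` exactly when the linear map `G(a)H` is continuous. The hypothesis on `G` rewrites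
`G(xa)H` as `G(x) • G(a)H`, which gives the left ideal property. For closedness, the same identity
makes `s ↦ G(s)H(t)` linear, hence continuous (it is continuous at `0`); so if `aₙ → a` in `I`, the
continuous maps `G(aₙ)H` converge pointwise to `G(a)H`, which is continuous by Banach–Steinhaus.
-/

open MulOpposite Filter Topology

theorem isClosed_setOf_continuous_of_continuous_apply {𝕜 X E F : Type*}
    [NontriviallyNormedField 𝕜] [TopologicalSpace X] [FrechetUrysohnSpace X]
    [NormedAddCommGroup E] [NormedSpace 𝕜 E] [CompleteSpace E]
    [NormedAddCommGroup F] [NormedSpace 𝕜 F]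
    (g : X → E →ₗ[𝕜] F) (hg : ∀ t, Continuous fun x => g x t) :
    IsClosed {x | Continuous (g x)} := by
  refine isClosed_of_closure_subset fun x hx => ?_
  obtain ⟨u, hu, hux⟩ := mem_closure_iff_seq_limit.1 hx
  let ψ : ℕ → E →L[𝕜] F := fun n => ⟨g (u n), hu n⟩
  have hψ : Tendsto (fun n t => ψ n t) atTop (𝓝 (g x)) :=
    tendsto_pi_nhds.2 fun t => ((hg t).tendsto x).comp hux
  exact (continuousLinearMapOfTendsto ψ hψ).continuous

theorem LinearMap.continuous_iff_of_tendsto_sub {R E F : Type*} [Semiring R]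
    [AddCommGroup E] [Module R E] [TopologicalSpace E] [IsTopologicalAddGroup E]
    [AddCommGroup F] [Module R F] [TopologicalSpace F] [IsTopologicalAddGroup F]
    {f g : E →ₗ[R] F} (h : Tendsto (f - g) (𝓝 0) (𝓝 0)) : Continuous f ↔ Continuous g := by
  refine ⟨fun hf => continuous_of_tendsto_nhds_zero g ?_,
    fun hg => continuous_of_tendsto_nhds_zero f ?_⟩
  · simpa using (hf.tendsto' 0 0 (map_zero f)).sub h
  · simpa using h.add (hg.tendsto' 0 0 (map_zero g))

section GeneralizedDerivation

variable {𝕜 A B M : Type*} [NontriviallyNormedField 𝕜] [NormedRing A] [NormedAlgebra 𝕜 A]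
  [NormedRing B] [NormedAddCommGroup M] [NormedSpace 𝕜 M] [Module B M] [Module Bᵐᵒᵖ M]
  {D E H : A →ₗ[𝕜] M} {F G : A → B}

theorem tendsto_op_smul_nhds_zero [IsBoundedSMul Bᵐᵒᵖ M] (hF : ContinuousAt F 0)
    (hid : ∀ a b, D (a * b) = op (F b) • E a + G a • H b) (a : A) :
    Tendsto (fun t => op (F t) • E a) (𝓝 0) (𝓝 0) := by
  have h0 : op (F 0) • E a = 0 := by simpa using (hid a 0).symm
  have hc : ContinuousAt (fun t => op (F t) • E a) 0 :=
    (continuous_op.continuousAt.comp hF).smul continuousAt_const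
  simpa [ContinuousAt, h0] using hc

theorem continuous_apply_mul_iff [SMulCommClass 𝕜 B M] [IsBoundedSMul Bᵐᵒᵖ M]
    (hF : ContinuousAt F 0) (hid : ∀ a b, D (a * b) = op (F b) • E a + G a • H b) (a : A) :
    (Continuous fun t => D (a * t)) ↔ Continuous (G a • H) := by
  refine LinearMap.continuous_iff_of_tendsto_sub (f := D ∘ₗ LinearMap.mulLeft 𝕜 a) ?_
  convert tendsto_op_smul_nhds_zero hF hid a using 2 with t
  simp [hid]

theorem continuous_smul_apply [SMulCommClass 𝕜 Bᵐᵒᵖ M] [IsBoundedSMul B M]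
    (hG : ContinuousAt G 0) (hid : ∀ a b, D (a * b) = op (F b) • E a + G a • H b) (t : A) :
    Continuous fun s => G s • H t := by
  have hlin : (fun s => G s • H t) = ⇑(D ∘ₗ LinearMap.mulRight 𝕜 t - op (F t) • E) := by
    ext s; simp [hid]
  have h0 : ContinuousAt (fun s => G s • H t) 0 := hG.smul continuousAt_const
  rw [hlin] at h0 ⊢
  exact continuous_of_continuousAt_zero _ h0

theorem isClosed_setOf_continuous_apply_mul [CompleteSpace A] [SMulCommClass 𝕜 B M]
    [SMulCommClass 𝕜 Bᵐᵒᵖ M] [IsBoundedSMul B M] [IsBoundedSMul Bᵐᵒᵖ M]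
    (hF : ContinuousAt F 0) (hG : ContinuousAt G 0)
    (hid : ∀ a b, D (a * b) = op (F b) • E a + G a • H b) :
    IsClosed {a | Continuous fun t => D (a * t)} := by
  simp_rw [continuous_apply_mul_iff hF hid]
  exact isClosed_setOf_continuous_of_continuous_apply (fun a => G a • H)
    (continuous_smul_apply hG hid)

theorem continuous_apply_mul_left_mul [SMulCommClass 𝕜 B M] [IsBoundedSMul B M]
    [IsBoundedSMul Bᵐᵒᵖ M]
    (hF : ContinuousAt F 0) (hid : ∀ a b, D (a * b) = op (F b) • E a + G a • H b)
    (hGH : ∀ a b c, (G (a * b) - G a * G b) • H c = 0) {a : A} (x : A)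
    (ha : Continuous fun t => D (a * t)) : Continuous fun t => D (x * a * t) := by
  have hmul : G (x * a) • H = G x • G a • H := by
    ext t; simpa [sub_smul, sub_eq_zero, mul_smul] using hGH x a t
  rw [continuous_apply_mul_iff hF hid] at ha ⊢
  rw [hmul]
  exact ha.const_smul (G x)

end GeneralizedDerivation

theorem stmt8_general {A B M : Type*}
    [NormedRing A] [CompleteSpace A] [NormedAlgebra ℂ A] [NormedRing B]
    [NormedAddCommGroup M] [NormedSpace ℂ M] [Module B M] [Module Bᵐᵒᵖ M]
    [SMulCommClass ℂ B M] [SMulCommClass ℂ Bᵐᵒᵖ M]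
    [IsBoundedSMul B M] [IsBoundedSMul Bᵐᵒᵖ M]
    (D₁ E H : A → M) (F G : A → B)
    (hD₁ : IsLinearMap ℂ D₁) (hE : IsLinearMap ℂ E) (hH : IsLinearMap ℂ H)
    (hF : ContinuousAt F 0) (hG : ContinuousAt G 0)
    (hid : ∀ a b : A, D₁ (a * b) = op (F b) • E a + G a • H b)
    (hGH : ∀ a b c : A, (G (a * b) - G a * G b) • H c = 0) :
    IsClosed {a : A | Continuous fun t => D₁ (a * t)} ∧
      (0 : A) ∈ {a : A | Continuous fun t => D₁ (a * t)} ∧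
      (∀ a b : A, (Continuous fun t => D₁ (a * t)) → (Continuous fun t => D₁ (b * t)) →
        Continuous fun t => D₁ ((a + b) * t)) ∧
      (∀ (c : ℂ) (a : A), (Continuous fun t => D₁ (a * t)) →
        Continuous fun t => D₁ ((c • a) * t)) ∧
      (∀ a x : A, (Continuous fun t => D₁ (a * t)) → Continuous fun t => D₁ ((x * a) * t)) ∧
      (∀ a x : A, (Continuous fun t => D₁ (a * t)) → Continuous fun t => D₁ ((a * x) * t)) := by
  have hid' : ∀ a b, hD₁.mk' D₁ (a * b) = op (F b) • hE.mk' E a + G a • hH.mk' H b := hid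
  refine ⟨isClosed_setOf_continuous_apply_mul hF hG hid', ?_, ?_, ?_,
    fun a x => continuous_apply_mul_left_mul hF hid' hGH x, ?_⟩
  · simpa [hD₁.map_zero] using continuous_const
  · intro a b ha hb
    simp only [add_mul, hD₁.map_add]
    exact ha.add hb
  · intro c a ha
    simp only [smul_mul_assoc, hD₁.map_smul]
    exact ha.const_smul c
  · intro a x ha
    simp only [mul_assoc]
    exact ha.comp (continuous_const_mul x)

/-- `I = { a | t ↦ D₁(at) is continuous }` is a closed two-sided ideal of `A`. -/
theorem stmt8 {A B M : Type*}
    [NormedRing A] [StarRing A] [CStarRing A] [CompleteSpace A]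
    [NormedAlgebra ℂ A] [StarModule ℂ A]
    [NormedRing B] [NormedAlgebra ℂ B] [CompleteSpace B]
    [NormedAddCommGroup M] [NormedSpace ℂ M] [CompleteSpace M]
    [Module B M] [Module Bᵐᵒᵖ M] [SMulCommClass B Bᵐᵒᵖ M]
    [SMulCommClass ℂ B M] [SMulCommClass ℂ Bᵐᵒᵖ M]
    [IsBoundedSMul B M] [IsBoundedSMul Bᵐᵒᵖ M]
    (D₁ E H : A → M) (F G : A → B)
    (hD₁ : IsLinearMap ℂ D₁) (hE : IsLinearMap ℂ E) (hH : IsLinearMap ℂ H)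
    (hF : ContinuousAt F 0) (hG : ContinuousAt G 0)
    (hid : ∀ a b : A, D₁ (a * b) = op (F b) • E a + G a • H b)
    (hGH : ∀ a b c : A, (G (a * b) - G a * G b) • H c = 0) :
    IsClosed {a : A | Continuous fun t => D₁ (a * t)} ∧
      (0 : A) ∈ {a : A | Continuous fun t => D₁ (a * t)} ∧
      (∀ a b : A, (Continuous fun t => D₁ (a * t)) → (Continuous fun t => D₁ (b * t)) →
        Continuous fun t => D₁ ((a + b) * t)) ∧
      (∀ (c : ℂ) (a : A), (Continuous fun t => D₁ (a * t)) →
        Continuous fun t => D₁ ((c • a) * t)) ∧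
      (∀ a x : A, (Continuous fun t => D₁ (a * t)) → Continuous fun t => D₁ ((x * a) * t)) ∧
      (∀ a x : A, (Continuous fun t => D₁ (a * t)) → Continuous fun t => D₁ ((a * x) * t)) :=
  stmt8_general D₁ E H F G hD₁ hE hH hF hG hid hGH
end

section
/- Let A be a C*-algebra, M a Banach bimodule over a Banach algebra B, and D₁ : A → M a linear map. Let I = { a ∈ A : t ↦ D₁(at) is continuous } and suppose I is a closed two-sided ideal of A. Then the restriction D₁|_I is continuous (bounded). -/
/-!
Suppose `D₁` were unbounded on `I`. Pick `aₙ ∈ I` with `‖D₁ aₙ‖ → ∞` and `∑ ‖aₙ‖² < ∞`, and put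
`b = (∑ aₙ aₙ*)^{1/4}`, which lies in `I` because `I` is a closed right ideal and `b` is a norm
limit of polynomials without constant term in `∑ aₙ aₙ*`. Since `aₙ aₙ* ≤ b⁴`, each `aₙ` factors
as `b cₙ` with `‖cₙ‖ ≤ ‖b‖`: `cₙ` is the limit of `b (b² + ε)⁻¹ aₙ` as `ε → 0`. Hence
`‖D₁ aₙ‖ = ‖D₁ (b cₙ)‖ ≤ ‖t ↦ D₁ (b t)‖ ‖b‖` is bounded, a contradiction.
-/

open scoped NNReal

theorem NonUnitalStarAlgebra.elemental_subset_of_isSelfAdjoint {R A : Type*} [CommSemiring R]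
    [StarRing R] [NonUnitalSemiring A] [StarRing A] [Module R A] [IsScalarTower R A A]
    [SMulCommClass R A A] [StarModule R A] [TopologicalSpace A] [IsSemitopologicalSemiring A]
    [ContinuousConstSMul R A] [ContinuousStar A]
    {S : NonUnitalSubalgebra R A} (hS : IsClosed (S : Set A)) {a : A} (ha : a ∈ S)
    (hsa : IsSelfAdjoint a) : (elemental R a : Set A) ⊆ S := by
  refine closure_minimal ?_ hS
  show (NonUnitalAlgebra.adjoin R ({a} ∪ star {a}) : Set A) ⊆ S
  rw [Set.star_singleton, hsa.star_eq, Set.union_self]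
  exact NonUnitalAlgebra.adjoin_le (Set.singleton_subset_iff.2 ha)

noncomputable def regularizedInv (ε t : ℝ) : ℝ := t / (t ^ 2 + ε)

section regularizedInv

variable {ε t : ℝ}

theorem continuous_regularizedInv (hε : 0 < ε) : Continuous (regularizedInv ε) :=
  continuous_id.div (by fun_prop) fun t => by positivity

theorem regularizedInv_nonneg (hε : 0 ≤ ε) (ht : 0 ≤ t) : 0 ≤ regularizedInv ε t := by
  unfold regularizedInv; positivity

theorem regularizedInv_mul_sq (hε : 0 < ε) :
    regularizedInv ε t * t ^ 2 = t - ε * t / (t ^ 2 + ε) := by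
  unfold regularizedInv; field_simp; ring

theorem mul_div_sq_add_le_sqrt (hε : 0 < ε) (ht : 0 ≤ t) : ε * t / (t ^ 2 + ε) ≤ √ε := by
  rw [div_le_iff₀ (by positivity)]
  have := Real.sq_sqrt hε.le
  nlinarith [mul_nonneg (Real.sqrt_nonneg ε) (sq_nonneg (t - √ε)), Real.sqrt_nonneg ε]

theorem abs_regularizedInv_mul_sq_le (hε : 0 < ε) (ht : 0 ≤ t) :
    |regularizedInv ε t| * t ^ 2 ≤ t := by
  rw [abs_of_nonneg (regularizedInv_nonneg hε.le ht), regularizedInv_mul_sq hε, sub_le_self_iff]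
  positivity

theorem abs_mul_regularizedInv_sub_one_mul_sq_le (hε : 0 < ε) :
    |t * regularizedInv ε t - 1| * t ^ 2 ≤ ε := by
  have hq : 0 < t ^ 2 + ε := by positivity
  have : t * regularizedInv ε t - 1 = -(ε / (t ^ 2 + ε)) := by
    unfold regularizedInv; field_simp; ring
  rw [this, abs_neg, abs_of_pos (by positivity), div_mul_eq_mul_div, div_le_iff₀ hq]
  nlinarith

theorem abs_regularizedInv_sub_mul_sq_le {δ η : ℝ} (hε : 0 < ε) (hδ : 0 < δ) (ht : 0 ≤ t)
    (hεη : ε ≤ η) (hδη : δ ≤ η) :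
    |regularizedInv ε t - regularizedInv δ t| * t ^ 2 ≤ √η := by
  rw [← abs_of_nonneg (sq_nonneg t), ← abs_mul, sub_mul,
    regularizedInv_mul_sq hε, regularizedInv_mul_sq hδ, sub_sub_sub_cancel_left]
  exact abs_sub_le_of_nonneg_of_le (by positivity)
    ((mul_div_sq_add_le_sqrt hδ ht).trans (Real.sqrt_le_sqrt hδη)) (by positivity)
    ((mul_div_sq_add_le_sqrt hε ht).trans (Real.sqrt_le_sqrt hεη))

end regularizedInv

section NonUnital

variable {A : Type*} [NonUnitalCStarAlgebra A] [PartialOrder A] [StarOrderedRing A]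

theorem cfcₙ_nnreal_mem {S : NonUnitalSubalgebra ℝ A} (hS : IsClosed (S : Set A)) {a : A}
    (ha : a ∈ S) (ha₀ : 0 ≤ a) (f : ℝ≥0 → ℝ≥0) : cfcₙ f a ∈ S := by
  rw [cfcₙ_nnreal_eq_real f a]
  exact NonUnitalStarAlgebra.elemental_subset_of_isSelfAdjoint hS ha (.of_nonneg ha₀)
    (cfcₙ_mem_elemental _ a)

theorem norm_mul_sq_le_of_mul_star_le {x y : A} (hxy : x * star x ≤ y) (z : A) :
    ‖z * x‖ ^ 2 ≤ ‖z * y * star z‖ := by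
  have hconj : z * (x * star x) * star z = z * x * star (z * x) := by
    rw [star_mul, mul_assoc, mul_assoc, mul_assoc]
  calc ‖z * x‖ ^ 2 = ‖z * (x * star x) * star z‖ := by
        rw [hconj, CStarRing.norm_self_mul_star, sq]
    _ ≤ ‖z * y * star z‖ :=
        CStarAlgebra.norm_le_norm_of_nonneg_of_le (hconj ▸ mul_star_self_nonneg (z * x))
          (star_right_conjugate_le_conjugate hxy z)

end NonUnital

section Factorization

variable {A : Type*} [CStarAlgebra A] [PartialOrder A] [StarOrderedRing A]

theorem norm_cfc_mul_le_of_mul_star_le_s9 {b x : A} (hb : IsSelfAdjoint b) (hx : x * star x ≤ b ^ 4)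
    {h : ℝ → ℝ} (hh : Continuous h) {c : ℝ} (hc : 0 ≤ c)
    (hbound : ∀ t ∈ spectrum ℝ b, |h t| * t ^ 2 ≤ c) : ‖cfc h b * x‖ ≤ c := by
  have hconj : ‖cfc h b * b ^ 4 * star (cfc h b)‖ ≤ c ^ 2 := by
    rw [(cfc_predicate h b).star_eq, ← cfc_pow_id (R := ℝ) b 4, ← cfc_mul h _ b, ← cfc_mul _ h b]
    refine norm_cfc_le (by positivity) fun t ht => ?_
    calc ‖h t * t ^ 4 * h t‖ = (|h t| * t ^ 2) ^ 2 := by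
          rw [Real.norm_eq_abs, ← abs_sq, mul_pow, sq_abs]; ring_nf
      _ ≤ c ^ 2 := pow_le_pow_left₀ (by positivity) (hbound t ht) 2
  exact (pow_le_pow_iff_left₀ (norm_nonneg _) hc two_ne_zero).1
    ((norm_mul_sq_le_of_mul_star_le hx _).trans hconj)

theorem spectrum_subset_Icc_of_nonneg {b : A} (hb : 0 ≤ b) : spectrum ℝ b ⊆ Set.Icc 0 ‖b‖ := by
  intro t ht
  refine ⟨spectrum_nonneg_of_nonneg hb ht, ?_⟩
  rcases subsingleton_or_nontrivial A with _ | _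
  · simp [spectrum.of_subsingleton] at ht
  · exact (le_abs_self t).trans (spectrum.norm_le_norm_of_mem ht)

theorem exists_eq_mul_of_mul_star_le_pow_four {b x : A} (hb : 0 ≤ b) (hx : x * star x ≤ b ^ 4) :
    ∃ c, x = b * c ∧ ‖c‖ ≤ ‖b‖ := by
  set ε : ℕ → ℝ := fun n => 1 / (n + 1)
  have hε (n : ℕ) : 0 < ε n := Nat.one_div_pos_of_nat
  set u : ℕ → A := fun n => cfc (regularizedInv (ε n)) b * x
  have hspec := spectrum_subset_Icc_of_nonneg hb
  have hu_norm (n : ℕ) : ‖u n‖ ≤ ‖b‖ :=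
    norm_cfc_mul_le_of_mul_star_le_s9 (.of_nonneg hb) hx (continuous_regularizedInv (hε n))
      (norm_nonneg b) fun t ht =>
        (abs_regularizedInv_mul_sq_le (hε n) (hspec ht).1).trans (hspec ht).2
  have hu_cauchy : CauchySeq u := by
    refine cauchySeq_of_le_tendsto_0 (fun N => √(ε N)) (fun n m N hn hm => ?_) ?_
    · have hn_cont := continuous_regularizedInv (hε n)
      have hm_cont := continuous_regularizedInv (hε m)
      rw [dist_eq_norm, ← sub_mul, ← cfc_sub _ _ b hn_cont.continuousOn hm_cont.continuousOn]
      exact norm_cfc_mul_le_of_mul_star_le_s9 (.of_nonneg hb) hx (hn_cont.sub hm_cont)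
        (Real.sqrt_nonneg _) fun t ht => abs_regularizedInv_sub_mul_sq_le (hε n) (hε m)
          (hspec ht).1 (Nat.one_div_le_one_div hn) (Nat.one_div_le_one_div hm)
    · simpa only [Real.sqrt_zero] using tendsto_one_div_add_atTop_nhds_zero_nat.sqrt
  have hbu : Filter.Tendsto (fun n => b * u n) Filter.atTop (nhds x) := by
    rw [tendsto_iff_norm_sub_tendsto_zero]
    refine squeeze_zero (fun n => norm_nonneg _) (fun n => ?_)
      tendsto_one_div_add_atTop_nhds_zero_nat
    have hcont := continuous_regularizedInv (hε n)
    have : b * u n - x = cfc (fun t => t * regularizedInv (ε n) t - 1) b * x := by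
      rw [cfc_sub _ _ b, cfc_mul (fun t => t) _ b, cfc_id' ℝ b, cfc_const_one ℝ b, sub_mul,
        one_mul, mul_assoc]
    rw [this]
    exact norm_cfc_mul_le_of_mul_star_le_s9 (.of_nonneg hb) hx (by fun_prop) (hε n).le
      fun t _ => abs_mul_regularizedInv_sub_one_mul_sq_le (hε n)
  obtain ⟨c, hc⟩ := cauchySeq_tendsto_of_complete hu_cauchy
  exact ⟨c, tendsto_nhds_unique hbu (hc.const_mul b),
    le_of_tendsto hc.norm (.of_forall hu_norm)⟩

theorem exists_mem_forall_eq_mul_of_summable {S : Submodule ℝ A} (hS : IsClosed (S : Set A))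
    (hmul : ∀ x ∈ S, ∀ y, x * y ∈ S) {a : ℕ → A} (haS : ∀ n, a n ∈ S)
    (ha : Summable fun n => ‖a n‖ ^ 2) : ∃ b ∈ S, ∀ n, ∃ c, a n = b * c ∧ ‖c‖ ≤ ‖b‖ := by
  let T : NonUnitalSubalgebra ℝ A := { S with mul_mem' := fun hx _ => hmul _ hx _ }
  have hsum : Summable fun n => a n * star (a n) :=
    .of_norm (by simpa only [CStarRing.norm_self_mul_star, sq] using ha)
  set s := ∑' n, a n * star (a n)
  have hs : s ∈ T := hS.mem_of_tendsto hsum.hasSum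
    (.of_forall fun F => sum_mem fun n _ => hmul _ (haS n) _)
  have hs₀ : 0 ≤ s := tsum_nonneg fun n => mul_star_self_nonneg _
  set b := CFC.sqrt (CFC.sqrt s)
  have hb4 : b ^ 4 = s := by
    rw [show b ^ 4 = (b * b) * (b * b) by noncomm_ring, CFC.sqrt_mul_sqrt_self _,
      CFC.sqrt_mul_sqrt_self _ hs₀]
  refine ⟨b, cfcₙ_nnreal_mem hS (cfcₙ_nnreal_mem hS hs hs₀ _) (CFC.sqrt_nonneg _) _, fun n => ?_⟩
  exact exists_eq_mul_of_mul_star_le_pow_four (CFC.sqrt_nonneg _)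
    (hb4 ▸ hsum.le_tsum n fun j _ => mul_star_self_nonneg _)

end Factorization

theorem exists_seq_summable_sq_norm_of_unbounded {E F : Type*} [NormedAddCommGroup E]
    [NormedSpace ℝ E] [NormedAddCommGroup F] [NormedSpace ℝ F] (f : E →ₗ[ℝ] F)
    {S : Submodule ℝ E} (h : ∀ C : ℝ, ∃ x ∈ S, C * ‖x‖ < ‖f x‖) :
    ∃ x : ℕ → E, (∀ n, x n ∈ S) ∧ Summable (fun n => ‖x n‖ ^ 2) ∧ ∀ n : ℕ, (n : ℝ) < ‖f (x n)‖ := by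
  have (n : ℕ) : ∃ x ∈ S, ‖x‖ = 2⁻¹ ^ n ∧ (n : ℝ) < ‖f x‖ := by
    obtain ⟨y, hyS, hy⟩ := h (n * 2 ^ n)
    have hy₀ : 0 < ‖y‖ := norm_pos_iff.2 fun hy₀ => by simp [hy₀] at hy
    have hr : 0 < 2⁻¹ ^ n / ‖y‖ := by positivity
    refine ⟨(2⁻¹ ^ n / ‖y‖) • y, S.smul_mem _ hyS, ?_, ?_⟩
    · rw [norm_smul, Real.norm_of_nonneg hr.le, div_mul_cancel₀ _ hy₀.ne']
    · rw [f.map_smul, norm_smul, Real.norm_of_nonneg hr.le]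
      calc (n : ℝ) = 2⁻¹ ^ n / ‖y‖ * (n * 2 ^ n * ‖y‖) := by
            field_simp; rw [mul_assoc, ← mul_pow]; norm_num
        _ < 2⁻¹ ^ n / ‖y‖ * ‖f y‖ := mul_lt_mul_of_pos_left hy hr
  choose x hxS hx_norm hx using this
  refine ⟨x, hxS, ?_, hx⟩
  simpa only [hx_norm, ← pow_mul, mul_comm] using
    summable_geometric_of_lt_one (by norm_num : (0 : ℝ) ≤ 2⁻¹ ^ 2) (by norm_num)

theorem stmt9_general {A M : Type*}
    [NormedRing A] [StarRing A] [CStarRing A] [CompleteSpace A]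
    [NormedAlgebra ℂ A] [StarModule ℂ A]
    [NormedAddCommGroup M] [NormedSpace ℂ M]
    (D₁ : A → M) (hD₁ : IsLinearMap ℂ D₁)
    (hclosed : IsClosed {a : A | Continuous fun t => D₁ (a * t)})
    (hadd : ∀ a b : A, (Continuous fun t => D₁ (a * t)) → (Continuous fun t => D₁ (b * t)) →
      Continuous fun t => D₁ ((a + b) * t))
    (hsmul : ∀ (c : ℂ) (a : A), (Continuous fun t => D₁ (a * t)) →
      Continuous fun t => D₁ ((c • a) * t))
    (hright : ∀ a x : A, (Continuous fun t => D₁ (a * t)) → Continuous fun t => D₁ ((a * x) * t)) :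
    ∃ C : ℝ, ∀ a : A, (Continuous fun t => D₁ (a * t)) → ‖D₁ a‖ ≤ C * ‖a‖ := by
  let _ : CStarAlgebra A := {}
  let _ : PartialOrder A := CStarAlgebra.spectralOrder A
  have _ : StarOrderedRing A := CStarAlgebra.spectralOrderedRing A
  let I : Submodule ℝ A :=
    { carrier := {a | Continuous fun t => D₁ (a * t)}
      add_mem' := hadd _ _
      zero_mem' := by simpa only [Set.mem_ofPred_eq, zero_mul, hD₁.map_zero] using continuous_const
      smul_mem' := fun r a ha => by
        simpa only [Set.mem_ofPred_eq, Complex.coe_smul] using hsmul r a ha }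
  by_contra! hunb
  obtain ⟨a, haI, ha_sq, ha_large⟩ :=
    exists_seq_summable_sq_norm_of_unbounded ((hD₁.mk' D₁).restrictScalars ℝ) (S := I) hunb
  obtain ⟨b, hbI, hfactor⟩ :=
    exists_mem_forall_eq_mul_of_summable (S := I) hclosed (fun x hx y => hright x y hx) haI ha_sq
  let γ : A →L[ℂ] M := ⟨(hD₁.mk' D₁).comp (LinearMap.mulLeft ℂ b), hbI⟩
  obtain ⟨n, hn⟩ := exists_nat_gt (‖γ‖ * ‖b‖)
  obtain ⟨c, hc, hc_norm⟩ := hfactor n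
  have : (n : ℝ) < ‖γ‖ * ‖b‖ :=
    calc (n : ℝ) < ‖D₁ (a n)‖ := ha_large n
      _ = ‖γ c‖ := by rw [hc]; rfl
      _ ≤ ‖γ‖ * ‖c‖ := γ.le_opNorm c
      _ ≤ ‖γ‖ * ‖b‖ := by gcongr
  exact lt_asymm hn this

/-- if `I = { a | t ↦ D₁(at) is continuous }` is a closed two-sided ideal of
the C*-algebra `A`, then the restriction of the linear map `D₁` to `I` is bounded. -/
theorem stmt9 {A M : Type*}
    [NormedRing A] [StarRing A] [CStarRing A] [CompleteSpace A]
    [NormedAlgebra ℂ A] [StarModule ℂ A]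
    [NormedAddCommGroup M] [NormedSpace ℂ M] [CompleteSpace M]
    (D₁ : A → M) (hD₁ : IsLinearMap ℂ D₁)
    (hclosed : IsClosed {a : A | Continuous fun t => D₁ (a * t)})
    (hadd : ∀ a b : A, (Continuous fun t => D₁ (a * t)) → (Continuous fun t => D₁ (b * t)) →
      Continuous fun t => D₁ ((a + b) * t))
    (hsmul : ∀ (c : ℂ) (a : A), (Continuous fun t => D₁ (a * t)) →
      Continuous fun t => D₁ ((c • a) * t))
    (hleft : ∀ a x : A, (Continuous fun t => D₁ (a * t)) → Continuous fun t => D₁ ((x * a) * t))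
    (hright : ∀ a x : A, (Continuous fun t => D₁ (a * t)) → Continuous fun t => D₁ ((a * x) * t)) :
    ∃ C : ℝ, ∀ a : A, (Continuous fun t => D₁ (a * t)) → ‖D₁ a‖ ≤ C * ‖a‖ :=
  stmt9_general D₁ hD₁ hclosed hadd hsmul hright
end
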